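/- arXiv:2102.02920 — 2 statements merged into one kernel-verified Lean document; each statement's English description precedes it below -/
import Mathlib

section
/- For every field K of characteristic 0, every n ≥ 1 and every τ ∈ K with τ ≠ 0, one has τ^{2n−2}·G_n(τ⁻¹) = G_n(τ); that is, the refined 20V generating function is palindromic. -/
/-!
Write `W = ((1+u)/(1-u))^{2n}` and `B_τ = τ^n (1-u)² / ((τ-u)(1-τu))`, so that
`g_20V^ref = g_20V + v^{n-1} W (B_τ - 1)`. Only the column `j = n - 1` of the matrix
depends on `τ`. Expanding `g_20V = A/(1 - vA) - u²/(1 - vu²)` with `A = ((1+u)/(1-u))²`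
geometrically in `v` gives `[u^i v^{n-1}] g_20V = [u^i] A^n - [u^i] u^{2n} = [u^i] W`
for `i < n`, so the `-1` cancels and that column is `([u^i] W B_τ)_i`. Since
`(τ⁻¹-u)(1-τ⁻¹u) = τ⁻²(τ-u)(1-τu)`, we have `τ^{2n-2} B_{τ⁻¹} = B_τ`, and the determinant
is linear in that column.
-/

noncomputable section

open MvPowerSeries in
/-- The refined generating series `g_20V^ref(u,v)` over a field `K`:
`g_20V + v^{n-1}·((1+u)/(1-u))^{2n}·( τ^n (1-u)² / ((τ-u)(1-τu)) - 1 )`. -/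
def gref (K : Type*) [Field K] (n : ℕ) (τ : K) : MvPowerSeries (Fin 2) K :=
  (1 + (X 0 : MvPowerSeries (Fin 2) K) ^ 2) * (1 + 2 * X 0 - X 0 ^ 2) *
      ((1 - (X 0 : MvPowerSeries (Fin 2) K) ^ 2 * X 1) *
        ((1 - X 0) ^ 2 - X 1 * (1 + X 0) ^ 2))⁻¹ +
    (X 1 : MvPowerSeries (Fin 2) K) ^ (n - 1) *
      ((1 + X 0) * ((1 - X 0 : MvPowerSeries (Fin 2) K))⁻¹) ^ (2 * n) *
      ((C (σ := Fin 2) (R := K) τ) ^ n * (1 - X 0) ^ 2 *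
          (((C (σ := Fin 2) (R := K) τ) - X 0) * (1 - (C (σ := Fin 2) (R := K) τ) * X 0))⁻¹ - 1)

open MvPowerSeries in
/-- `G_n(τ) = det_{0≤i,j≤n-1}( g_20V^ref|_{u^i v^j} )`, the determinant formula for the
refined 20V generating polynomial `Z_n^{20V}(τ)`. -/
def G (K : Type*) [Field K] (n : ℕ) (τ : K) : K :=
  Matrix.det (Matrix.of fun i j : Fin n =>
    coeff (R := K) (Finsupp.single 0 (i : ℕ) + Finsupp.single 1 (j : ℕ)) (gref K n τ))

end

open MvPowerSeries Finsupp

theorem PowerSeries.coeff_eq_pow_succ_of_mul_one_sub_X_mul_C {R : Type*} [CommRing R]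
    {F : PowerSeries R} {c : R} (hF : F * (1 - PowerSeries.X * PowerSeries.C c) = PowerSeries.C c)
    (j : ℕ) : PowerSeries.coeff j F = c ^ (j + 1) := by
  have hrec : F = PowerSeries.C c + PowerSeries.X * (F * PowerSeries.C c) := by
    linear_combination hF
  induction j with
  | zero => rw [hrec]; simp
  | succ j ih =>
    rw [hrec, map_add, PowerSeries.coeff_succ_X_mul, PowerSeries.coeff_mul_C, ih,
      PowerSeries.coeff_C, if_neg j.succ_ne_zero]
    ring

theorem MvPowerSeries.map_inv_eq_of_mul_eq_one {σ k S F : Type*} [Field k] [Monoid S]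
    [FunLike F (MvPowerSeries σ k) S] [MonoidHomClass F (MvPowerSeries σ k) S] (f : F)
    {φ : MvPowerSeries σ k} (hφ : constantCoeff φ ≠ 0) {ψ : S} (h : f φ * ψ = 1) :
    f φ⁻¹ = ψ :=
  left_inv_eq_right_inv (by rw [← map_mul, MvPowerSeries.inv_mul_cancel _ hφ, map_one]) h

theorem Matrix.det_eq_mul_det_of_col_eq_mul {ι R : Type*} [Fintype ι] [DecidableEq ι]
    [CommRing R] {M N : Matrix ι ι R} (k : ι) (c : R) (hk : ∀ i, N i k = c * M i k)
    (hne : ∀ i j, j ≠ k → N i j = M i j) : N.det = c * M.det := by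
  have hN : N = M.updateCol k (c • fun i => M i k) := by
    ext i j
    rcases eq_or_ne j k with rfl | hj
    · simp [hk]
    · simp [hj, hne i j hj]
  rw [hN, det_updateCol_smul, updateCol_eq_self]

namespace MvPowerSeries

section finTwoEquivPowerSeries

variable (R : Type*) [CommSemiring R]

/-- Bivariate power series in `X 0, X 1` as power series in `X 1` over power series in `X 0`. -/
noncomputable def finTwoEquivPowerSeries :
    MvPowerSeries (Fin 2) R ≃ₐ[R] PowerSeries (MvPowerSeries (Fin 1) R) :=
  (renameEquiv R (Equiv.swap 0 1)).trans (finSuccEquiv R 1)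

variable {R}

theorem finTwoEquivPowerSeries_apply (s : MvPowerSeries (Fin 2) R) :
    finTwoEquivPowerSeries R s = finSuccEquiv R 1 (rename (Equiv.swap 0 1) s) :=
  rfl

theorem coeff_coeff_finTwoEquivPowerSeries (s : MvPowerSeries (Fin 2) R) (i j : ℕ) :
    coeff (single 0 i) (PowerSeries.coeff j (finTwoEquivPowerSeries R s)) =
      coeff (single 0 i + single 1 j) s := by
  have : cons j (single (0 : Fin 1) i) =
      embDomain (Equiv.swap (0 : Fin 2) 1).toEmbedding (single 0 i + single 1 j) := by
    ext t
    fin_cases t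
    · simp
    · simpa using cons_succ (0 : Fin 1) j (single 0 i)
  rw [finTwoEquivPowerSeries_apply, coeff_coeff_finSuccEquiv, this]
  exact coeff_embDomain_rename _ s _

@[simp]
theorem finTwoEquivPowerSeries_X_zero :
    finTwoEquivPowerSeries R (X 0) = PowerSeries.C (X 0) := by
  rw [finTwoEquivPowerSeries_apply, rename_X, Equiv.swap_apply_left]
  exact finSuccEquiv_X_succ 0

@[simp]
theorem finTwoEquivPowerSeries_X_one :
    finTwoEquivPowerSeries R (X 1) = PowerSeries.X := by
  rw [finTwoEquivPowerSeries_apply, rename_X, Equiv.swap_apply_right]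
  exact finSuccEquiv_X_zero

theorem coeff_X_one_pow_mul (s : MvPowerSeries (Fin 2) R) (i j k : ℕ) :
    coeff (single 0 i + single 1 j) (X 1 ^ k * s) =
      if k ≤ j then coeff (single 0 i + single 1 (j - k)) s else 0 := by
  simp_rw [← coeff_coeff_finTwoEquivPowerSeries, map_mul, map_pow, finTwoEquivPowerSeries_X_one,
    PowerSeries.coeff_X_pow_mul', apply_ite (coeff (single (0 : Fin 1) i)), map_zero]

theorem coeff_single_zero_of_finTwoEquivPowerSeries_eq_C {s : MvPowerSeries (Fin 2) R}
    {c : MvPowerSeries (Fin 1) R} (hs : finTwoEquivPowerSeries R s = PowerSeries.C c) (i : ℕ) :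
    coeff (single 0 i) s = coeff (single 0 i) c := by
  simpa [hs] using (coeff_coeff_finTwoEquivPowerSeries s i 0).symm

end finTwoEquivPowerSeries

section Field

variable {K : Type*} [Field K]

theorem coeff_mul_inv_one_sub_X_one_mul {s : MvPowerSeries (Fin 2) K}
    {c : MvPowerSeries (Fin 1) K} (hs : finTwoEquivPowerSeries K s = PowerSeries.C c) (i j : ℕ) :
    coeff (single 0 i + single 1 j) (s * (1 - X 1 * s)⁻¹) = coeff (single 0 i) (c ^ (j + 1)) := by
  have hF : finTwoEquivPowerSeries K (s * (1 - X 1 * s)⁻¹) * (1 - PowerSeries.X * PowerSeries.C c) =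
      PowerSeries.C c := by
    rw [← hs, ← finTwoEquivPowerSeries_X_one, ← map_one (finTwoEquivPowerSeries K), ← map_mul,
      ← map_sub, ← map_mul, mul_assoc, MvPowerSeries.inv_mul_cancel _ (by simp), mul_one]
  rw [← coeff_coeff_finTwoEquivPowerSeries,
    PowerSeries.coeff_eq_pow_succ_of_mul_one_sub_X_mul_C hF]

noncomputable def cayleyX {σ : Type*} (i : σ) : MvPowerSeries σ K :=
  (1 + X i) * (1 - X i)⁻¹

theorem cayleyX_mul_one_sub_X {σ : Type*} (i : σ) :
    cayleyX i * (1 - X i) = (1 + X i : MvPowerSeries σ K) := by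
  rw [cayleyX, mul_assoc, MvPowerSeries.inv_mul_cancel _ (by simp), mul_one]

theorem finTwoEquivPowerSeries_cayleyX :
    finTwoEquivPowerSeries K (cayleyX 0) = PowerSeries.C (cayleyX 0) := by
  have hinv : finTwoEquivPowerSeries K (1 - X 0)⁻¹ = PowerSeries.C (1 - X 0)⁻¹ := by
    refine map_inv_eq_of_mul_eq_one _ (by simp) ?_
    rw [map_sub, map_one, finTwoEquivPowerSeries_X_zero, ← map_one PowerSeries.C, ← map_sub,
      ← map_mul, MvPowerSeries.mul_inv_cancel _ (by simp), map_one]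
  rw [cayleyX, cayleyX, map_mul, hinv, map_add, map_one, finTwoEquivPowerSeries_X_zero, map_mul,
    map_add, map_one]

end Field

end MvPowerSeries

section TwentyVertex

variable {K : Type*} [Field K]

local notation "u" => (X 0 : MvPowerSeries (Fin 2) K)
local notation "v" => (X 1 : MvPowerSeries (Fin 2) K)

noncomputable def g20V : MvPowerSeries (Fin 2) K :=
  (1 + u ^ 2) * (1 + 2 * u - u ^ 2) * ((1 - u ^ 2 * v) * ((1 - u) ^ 2 - v * (1 + u) ^ 2))⁻¹

noncomputable def boundaryDenom (τ : K) : MvPowerSeries (Fin 2) K :=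
  (C τ - u) * (1 - C τ * u)

noncomputable def boundaryFactor (n : ℕ) (τ : K) : MvPowerSeries (Fin 2) K :=
  C τ ^ n * (1 - u) ^ 2 * (boundaryDenom τ)⁻¹

theorem gref_eq (n : ℕ) (τ : K) :
    gref K n τ = g20V + v ^ (n - 1) * (cayleyX 0 ^ (2 * n) * (boundaryFactor n τ - 1)) := by
  unfold gref
  congr 1
  exact mul_assoc _ _ _

theorem g20V_eq :
    g20V = cayleyX 0 ^ 2 * (1 - v * cayleyX 0 ^ 2)⁻¹ - u ^ 2 * (1 - v * u ^ 2)⁻¹ := by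
  have hP : (1 - v * u ^ 2) * (1 - v * u ^ 2)⁻¹ = 1 := MvPowerSeries.mul_inv_cancel _ (by simp)
  have hR : (1 - v * cayleyX 0 ^ 2) * (1 - v * cayleyX 0 ^ 2)⁻¹ = 1 :=
    MvPowerSeries.mul_inv_cancel _ (by simp)
  rw [g20V, eq_comm, MvPowerSeries.eq_mul_inv_iff_mul_eq (by simp)]
  linear_combination (1 - v * u ^ 2) * (1 + u) ^ 2 * hR
    + (1 - v * u ^ 2) * (1 - v * cayleyX 0 ^ 2)⁻¹ * (cayleyX 0 * (1 - u) + 1 + u) *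
      cayleyX_mul_one_sub_X (K := K) (0 : Fin 2)
    - u ^ 2 * ((1 - u) ^ 2 - v * (1 + u) ^ 2) * hP

theorem coeff_g20V {i j : ℕ} (hi : i < 2 * (j + 1)) :
    coeff (single 0 i + single 1 j) g20V =
      coeff (single 0 i) ((cayleyX 0 : MvPowerSeries (Fin 2) K) ^ (2 * (j + 1))) := by
  have hpow (k : ℕ) :
      finTwoEquivPowerSeries K (cayleyX 0 ^ k) = PowerSeries.C (cayleyX 0 ^ k) := by
    rw [map_pow, finTwoEquivPowerSeries_cayleyX, map_pow]
  have hu : finTwoEquivPowerSeries K (u ^ 2) = PowerSeries.C (X 0 ^ 2) := by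
    rw [map_pow, finTwoEquivPowerSeries_X_zero, map_pow]
  rw [g20V_eq, map_sub, coeff_mul_inv_one_sub_X_one_mul (hpow 2),
    coeff_mul_inv_one_sub_X_one_mul hu, coeff_single_zero_of_finTwoEquivPowerSeries_eq_C (hpow _),
    ← pow_mul, ← pow_mul, coeff_X_pow,
    if_neg ((single_injective 0).ne hi.ne), sub_zero]

theorem boundaryDenom_inv {τ : K} (hτ : τ ≠ 0) :
    boundaryDenom τ⁻¹ = C (τ⁻¹ ^ 2) * boundaryDenom τ := by
  have hτ' : (C τ : MvPowerSeries (Fin 2) K) * C τ⁻¹ = 1 := by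
    rw [← map_mul, mul_inv_cancel₀ hτ, map_one]
  rw [boundaryDenom, boundaryDenom, map_pow]
  linear_combination (u * (1 + C τ * C τ⁻¹) - C τ⁻¹ - C τ⁻¹ * u ^ 2) * hτ'

theorem C_mul_boundaryFactor_inv {n : ℕ} (hn : 1 ≤ n) {τ : K} (hτ : τ ≠ 0) :
    C (τ ^ (2 * n - 2)) * boundaryFactor n τ⁻¹ = boundaryFactor n τ := by
  have hpow : τ ^ (2 * n - 2) * τ⁻¹ ^ n * (τ⁻¹ ^ 2)⁻¹ = τ ^ n := by
    obtain ⟨m, rfl⟩ : ∃ m, n = m + 1 := ⟨n - 1, by omega⟩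
    rw [show 2 * (m + 1) - 2 = 2 * m by omega, inv_pow, inv_pow, inv_inv]
    field_simp
    ring
  have hC : C (τ ^ (2 * n - 2)) * C τ⁻¹ ^ n * C (τ⁻¹ ^ 2)⁻¹ =
      (C τ ^ n : MvPowerSeries (Fin 2) K) := by
    rw [← map_pow, ← map_mul, ← map_mul, hpow, map_pow]
  rw [boundaryFactor, boundaryFactor, boundaryDenom_inv hτ, MvPowerSeries.mul_inv_rev,
    MvPowerSeries.C_inv]
  linear_combination (1 - u) ^ 2 * (boundaryDenom τ)⁻¹ * hC

theorem coeff_gref_of_lt {n i j : ℕ} (hj : j < n - 1) (τ : K) :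
    coeff (single 0 i + single 1 j) (gref K n τ) = coeff (single 0 i + single 1 j) g20V := by
  rw [gref_eq, map_add, coeff_X_one_pow_mul, if_neg (by omega), add_zero]

theorem coeff_gref_last {n i : ℕ} (hn : 1 ≤ n) (hi : i < n) (τ : K) :
    coeff (single 0 i + single 1 (n - 1)) (gref K n τ) =
      coeff (single 0 i) (cayleyX 0 ^ (2 * n) * boundaryFactor n τ) := by
  rw [gref_eq, map_add, coeff_X_one_pow_mul, if_pos le_rfl, Nat.sub_self, single_zero, add_zero,
    coeff_g20V (by omega), Nat.sub_add_cancel hn, mul_sub, mul_one, map_sub, add_sub_cancel]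

end TwentyVertex

theorem refined_20V_palindromic_general (K : Type*) [Field K] (n : ℕ) (hn : 1 ≤ n)
    (τ : K) (hτ0 : τ ≠ 0) :
    τ ^ (2 * n - 2) * G K n τ⁻¹ = G K n τ := by
  refine (Matrix.det_eq_mul_det_of_col_eq_mul ⟨n - 1, by omega⟩ _ (fun i => ?_)
    fun i j hj => ?_).symm
  · simp only [Matrix.of_apply]
    rw [coeff_gref_last hn i.2, coeff_gref_last hn i.2, ← C_mul_boundaryFactor_inv hn hτ0,
      mul_left_comm, coeff_C_mul]
  · have hj' : (j : ℕ) < n - 1 := (Nat.le_sub_one_of_lt j.2).lt_of_ne fun h => hj (Fin.ext h)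
    simp only [Matrix.of_apply]
    rw [coeff_gref_of_lt hj', coeff_gref_of_lt hj']

/-- The refined 20V generating function is palindromic: `τ^{2n-2}·G_n(τ⁻¹) = G_n(τ)`. -/
theorem refined_20V_palindromic (K : Type*) [Field K] [CharZero K] (n : ℕ) (hn : 1 ≤ n)
    (τ : K) (hτ0 : τ ≠ 0) :
    τ ^ (2 * n - 2) * G K n τ⁻¹ = G K n τ :=
  refined_20V_palindromic_general K n hn τ hτ0
end

section
/- For every n ≥ 2, Z_{n,n−1}^DT = Z_{n−1}^DT; that is, the number of n-tuples of pairwise non-intersecting Schröder paths (π_i from (0,2i) to (2i+1,2i+1)) whose topmost path π_{n−1} first reaches the line x + y = 4n−2 at its topmost accessible point (n, 3n−2) equals the total number Z_{n−1}^DT of such (n−1)-tuples. -/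
noncomputable section

/-- A single Schröder step: up `(1,1)`, down `(1,-1)` or horizontal `(2,0)`. -/
def SchroderStep (a b : ℤ × ℤ) : Prop :=
  b - a = (1, 1) ∨ b - a = (1, -1) ∨ b - a = (2, 0)

/-- A Schröder path: consecutive differences are Schröder steps. -/
def IsSchroderPath (p : List (ℤ × ℤ)) : Prop := p.Chain' SchroderStep

/-- The set of Schröder paths from `a` to `b`. -/
def SchroderPaths (a b : ℤ × ℤ) : Set (List (ℤ × ℤ)) :=
  {p | IsSchroderPath p ∧ p.head? = some a ∧ p.getLast? = some b}

/-- The first visited point of the path `p` on the line `x + y = c` is `pt`: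
`p` splits as `l₁ ++ pt :: l₂` where no point of `l₁` lies on the line. -/
def FirstVisit (p : List (ℤ × ℤ)) (c : ℤ) (pt : ℤ × ℤ) : Prop :=
  ∃ l₁ l₂ : List (ℤ × ℤ), p = l₁ ++ pt :: l₂ ∧ ∀ x ∈ l₁, x.1 + x.2 ≠ c

/-- `Z_{n,k}^DT`: the number of `n`-tuples of pairwise non-intersecting Schröder paths
(`π_i` from `(0,2i)` to `(2i+1,2i+1)`) whose top path `π_{n-1}` first visits the line
`x + y = 4n-2` at the point `(2n-1-k, 2n-1+k)`. -/
def ZDTref (n k : ℕ) : ℕ :=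
  Nat.card {π : Fin n → List (ℤ × ℤ) //
    (∀ i : Fin n,
      π i ∈ SchroderPaths (0, 2 * (i : ℤ)) (2 * (i : ℤ) + 1, 2 * (i : ℤ) + 1)) ∧
    (∀ i j : Fin n, i ≠ j → List.Disjoint (π i) (π j)) ∧
    ∀ i : Fin n, (i : ℕ) = n - 1 →
      FirstVisit (π i) (4 * (n : ℤ) - 2)
        (2 * (n : ℤ) - 1 - (k : ℤ), 2 * (n : ℤ) - 1 + (k : ℤ))}

/-- `Z_n^DT`: the number of `n`-tuples of pairwise non-intersecting Schröder paths,
the `i`-th running from `(0, 2i)` to `(2i+1, 2i+1)`. -/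
def ZDT (n : ℕ) : ℕ :=
  Nat.card {π : Fin n → List (ℤ × ℤ) //
    (∀ i : Fin n,
      π i ∈ SchroderPaths (0, 2 * (i : ℤ)) (2 * (i : ℤ) + 1, 2 * (i : ℤ) + 1)) ∧
    ∀ i j : Fin n, i ≠ j → List.Disjoint (π i) (π j)}

/-!
Along a Schröder path both `x - y` and `x + y` are nondecreasing. Put `m = n - 1`: the top path
runs from `(0, 2m)` to `(2m + 1, 2m + 1)`, and `(m + 1, 3m + 1)` lies on the line `x - y = -2m`
of its start and on the line `x + y = 4m + 2` of its end. So a top path through that point is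
forced: up-steps along the first line, then down-steps along the second. A lower path `π_i`
stays in `x - y ≥ -2i`, `x + y ≤ 4i + 2`, so it never meets the forced path, and deleting the
top path is a bijection onto the `(n - 1)`-tuples.
-/

open List

theorem List.IsChain.apply_mem_Icc {α β : Type*} [Preorder β] {R : α → α → Prop} {g : α → β}
    {l : List α} {a b x : α} (hl : l.IsChain R) (hg : ∀ x y, R x y → g x ≤ g y)
    (ha : l.head? = some a) (hb : l.getLast? = some b) (hx : x ∈ l) :
    g x ∈ Set.Icc (g a) (g b) := by
  have hp : l.Pairwise (fun x y => g x ≤ g y) := (hl.imp hg).pairwise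
  constructor
  · obtain ⟨l', rfl⟩ := List.head?_eq_some_iff.1 ha
    rcases List.mem_cons.1 hx with rfl | hx
    exacts [le_rfl, List.rel_of_pairwise_cons hp hx]
  · obtain ⟨l', rfl⟩ := List.getLast?_eq_some_iff.1 hb
    rcases List.mem_append.1 hx with hx | hx
    · exact List.pairwise_append.1 hp |>.2.2 x hx b (List.mem_singleton_self b)
    · rw [List.mem_singleton.1 hx]

theorem List.isChain_iterate {α : Type*} (f : α → α) (a : α) (n : ℕ) :
    (iterate f a n).IsChain (fun x y => f x = y) := by
  induction n generalizing a with
  | zero => exact .nil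
  | succ n ih =>
    cases n with
    | zero => exact .singleton a
    | succ n => exact List.isChain_cons_cons.2 ⟨rfl, ih (f a)⟩

theorem List.getLast?_iterate {α : Type*} (f : α → α) (a : α) (n : ℕ) :
    (iterate f a (n + 1)).getLast? = some (f^[n] a) := by
  rw [iterate_add, List.getLast?_append]
  simp [iterate]

theorem List.IsChain.eq_iterate {α : Type*} {f : α → α} {l : List α} {a : α}
    (hl : l.IsChain (fun x y => f x = y)) (ha : l.head? = some a) :
    l = iterate f a l.length := by
  obtain ⟨l', rfl⟩ := List.head?_eq_some_iff.1 ha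
  refine List.ext_getElem (by simp) fun i h _ => ?_
  rw [getElem_iterate, ← hl.iterate_eq_of_apply_eq i h]
  rfl

theorem List.IsChain.eq_iterate_add {G : Type*} [AddCommGroup G] [IsAddTorsionFree G] {d : G}
    (hd : d ≠ 0) {l : List G} {a : G} {k : ℕ} (hl : l.IsChain (fun x y => x + d = y))
    (ha : l.head? = some a) (hb : l.getLast? = some (a + k • d)) :
    l = iterate (· + d) a (k + 1) := by
  have hl' := hl.eq_iterate ha
  obtain ⟨j, hj⟩ : ∃ j, l.length = j + 1 :=
    Nat.exists_eq_succ_of_ne_zero (by rintro h; simp [List.length_eq_zero_iff.1 h] at ha)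
  rw [hl', hj, getLast?_iterate, add_right_iterate_apply, Option.some_inj, add_right_inj] at hb
  have hjk : j = k := by
    rcases le_total j k with h | h <;> obtain ⟨r, rfl⟩ := Nat.exists_eq_add_of_le h <;>
      simpa [add_nsmul, hd] using hb
  rw [hl', hj, hjk]

theorem schroderStep_iff {a b : ℤ × ℤ} :
    SchroderStep a b ↔ b = a + (1, 1) ∨ b = a + (1, -1) ∨ b = a + (2, 0) := by
  simp only [SchroderStep, sub_eq_iff_eq_add']

namespace SchroderStep

variable {a b : ℤ × ℤ}

theorem fst_add_snd_le (h : SchroderStep a b) : a.1 + a.2 ≤ b.1 + b.2 := by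
  rcases schroderStep_iff.1 h with rfl | rfl | rfl <;>
    simp only [Prod.fst_add, Prod.snd_add] <;> omega

theorem fst_sub_snd_le (h : SchroderStep a b) : a.1 - a.2 ≤ b.1 - b.2 := by
  rcases schroderStep_iff.1 h with rfl | rfl | rfl <;>
    simp only [Prod.fst_add, Prod.snd_add] <;> omega

theorem eq_add_one_one (h : SchroderStep a b) (hab : b.1 - b.2 = a.1 - a.2) :
    b = a + (1, 1) := by
  rcases schroderStep_iff.1 h with rfl | rfl | rfl <;>
    simp only [Prod.fst_add, Prod.snd_add, Prod.ext_iff] at hab ⊢ <;> omega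

theorem eq_add_one_neg_one (h : SchroderStep a b) (hab : b.1 + b.2 = a.1 + a.2) :
    b = a + (1, -1) := by
  rcases schroderStep_iff.1 h with rfl | rfl | rfl <;>
    simp only [Prod.fst_add, Prod.snd_add, Prod.ext_iff] at hab ⊢ <;> omega

end SchroderStep

section SchroderPaths

variable {p : List (ℤ × ℤ)} {a b x : ℤ × ℤ}

theorem fst_add_snd_mem_Icc_of_mem_schroderPaths (hp : p ∈ SchroderPaths a b) (hx : x ∈ p) :
    x.1 + x.2 ∈ Set.Icc (a.1 + a.2) (b.1 + b.2) :=
  hp.1.apply_mem_Icc (g := fun x => x.1 + x.2) (fun _ _ => SchroderStep.fst_add_snd_le)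
    hp.2.1 hp.2.2 hx

theorem fst_sub_snd_mem_Icc_of_mem_schroderPaths (hp : p ∈ SchroderPaths a b) (hx : x ∈ p) :
    x.1 - x.2 ∈ Set.Icc (a.1 - a.2) (b.1 - b.2) :=
  hp.1.apply_mem_Icc (g := fun x => x.1 - x.2) (fun _ _ => SchroderStep.fst_sub_snd_le)
    hp.2.1 hp.2.2 hx

theorem mem_schroderPaths_append_cons {l₁ l₂ : List (ℤ × ℤ)}
    (hp : l₁ ++ x :: l₂ ∈ SchroderPaths a b) :
    l₁ ++ [x] ∈ SchroderPaths a x ∧ x :: l₂ ∈ SchroderPaths x b := by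
  obtain ⟨hc, ha, hb⟩ := hp
  have hc' : ((l₁ ++ [x]) ++ l₂).IsChain SchroderStep := List.append_cons l₁ x l₂ ▸ hc
  refine ⟨⟨hc'.left_of_append, ?_, by simp⟩, ⟨hc.right_of_append, rfl, ?_⟩⟩
  · cases l₁ <;> simpa using ha
  · simpa [List.getLast?_append] using hb

theorem eq_iterate_of_mem_schroderPaths_add_one_one {k : ℕ}
    (hp : p ∈ SchroderPaths a (a + k • (1, 1))) : p = iterate (· + (1, 1)) a (k + 1) := by
  have hline : ∀ x ∈ p, x.1 - x.2 = a.1 - a.2 := fun x hx => by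
    have := fst_sub_snd_mem_Icc_of_mem_schroderPaths hp hx
    simp only [Prod.smul_mk, Int.nsmul_eq_mul, mul_one, Prod.fst_add, Prod.snd_add,
      add_sub_add_right_eq_sub, Set.Icc_self, Set.mem_singleton_iff] at this
    omega
  refine hp.1.imp_of_mem_imp (fun x y hx hy hxy => ?_) |>.eq_iterate_add (by simp) hp.2.1 hp.2.2
  exact (hxy.eq_add_one_one ((hline y hy).trans (hline x hx).symm)).symm

theorem eq_iterate_of_mem_schroderPaths_add_one_neg_one {k : ℕ}
    (hp : p ∈ SchroderPaths a (a + k • (1, -1))) : p = iterate (· + (1, -1)) a (k + 1) := by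
  have hline : ∀ x ∈ p, x.1 + x.2 = a.1 + a.2 := fun x hx => by
    have := fst_add_snd_mem_Icc_of_mem_schroderPaths hp hx
    simp only [Prod.smul_mk, Int.nsmul_eq_mul, mul_one, mul_neg, Prod.fst_add, Prod.snd_add,
      Set.mem_Icc] at this
    omega
  refine hp.1.imp_of_mem_imp (fun x y hx hy hxy => ?_) |>.eq_iterate_add (by simp) hp.2.1 hp.2.2
  exact (hxy.eq_add_one_neg_one ((hline y hy).trans (hline x hx).symm)).symm

end SchroderPaths

def cornerPath (m : ℕ) : List (ℤ × ℤ) :=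
  iterate (· + (1, 1)) ((0 : ℤ), 2 * (m : ℤ)) (m + 1) ++
    iterate (· + (1, -1)) ((m : ℤ) + 1, 3 * (m : ℤ) + 1) (m + 1)

section cornerPath

variable {m : ℕ}

theorem cornerPath_mem_schroderPaths (m : ℕ) :
    cornerPath m ∈ SchroderPaths (0, 2 * m) (2 * m + 1, 2 * m + 1) := by
  unfold cornerPath
  refine ⟨List.isChain_append.2 ⟨?_, ?_, ?_⟩, by simp, ?_⟩
  · exact (isChain_iterate _ _ _).imp (by rintro x _ rfl; exact schroderStep_iff.2 (.inl rfl))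
  · exact (isChain_iterate _ _ _).imp
      (by rintro x _ rfl; exact schroderStep_iff.2 (.inr (.inl rfl)))
  · intro x hx y hy
    rw [getLast?_iterate, add_right_iterate_apply, Option.mem_def, Option.some_inj] at hx
    rw [List.iterate, List.head?_cons, Option.mem_def, Option.some_inj] at hy
    subst hx hy
    exact schroderStep_iff.2 (.inl (by simp [Prod.ext_iff]; ring))
  · rw [List.getLast?_append, getLast?_iterate, add_right_iterate_apply]
    simp [Prod.ext_iff]; omega

theorem firstVisit_cornerPath (m : ℕ) :
    FirstVisit (cornerPath m) (4 * m + 2) (m + 1, 3 * m + 1) := by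
  refine ⟨_, _, rfl, fun x hx => ?_⟩
  obtain ⟨j, hj, rfl⟩ := List.mem_iterate.1 hx
  simp only [add_right_iterate_apply]
  simp only [Prod.smul_mk, Int.nsmul_eq_mul, mul_one, Prod.fst_add, Prod.snd_add]
  omega

theorem mem_cornerPath {x : ℤ × ℤ} (hx : x ∈ cornerPath m) :
    x.1 - x.2 = -(2 * m) ∨ x.1 + x.2 = 4 * m + 2 := by
  rcases List.mem_append.1 (cornerPath.eq_def m ▸ hx) with hx | hx <;>
    obtain ⟨j, -, rfl⟩ := List.mem_iterate.1 hx
  · left; simp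
  · right; simp; ring

theorem eq_cornerPath_of_mem {p : List (ℤ × ℤ)}
    (hp : p ∈ SchroderPaths (0, 2 * m) (2 * m + 1, 2 * m + 1))
    (hx : ((m : ℤ) + 1, 3 * (m : ℤ) + 1) ∈ p) :
    p = cornerPath m := by
  obtain ⟨l₁, l₂, rfl⟩ := List.append_of_mem hx
  obtain ⟨hup, hdown⟩ := mem_schroderPaths_append_cons hp
  have h₁ := eq_iterate_of_mem_schroderPaths_add_one_one (k := m + 1)
    (by convert hup using 2; simp [Prod.ext_iff]; ring)
  have h₂ := eq_iterate_of_mem_schroderPaths_add_one_neg_one (k := m)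
    (by convert hdown using 2; simp [Prod.ext_iff]; omega)
  rw [iterate_add] at h₁
  rw [cornerPath, ← (List.append_inj' h₁ rfl).1, h₂]

theorem disjoint_cornerPath {i : ℕ} (him : i < m) {q : List (ℤ × ℤ)}
    (hq : q ∈ SchroderPaths (0, 2 * i) (2 * i + 1, 2 * i + 1)) : q.Disjoint (cornerPath m) :=
  fun x hxq hxc => by
    have hsum := fst_add_snd_mem_Icc_of_mem_schroderPaths hq hxq
    have hsub := fst_sub_snd_mem_Icc_of_mem_schroderPaths hq hxq
    simp only [Set.mem_Icc] at hsum hsub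
    rcases mem_cornerPath hxc with h | h <;> omega

end cornerPath

def IsSchroderFamily {n : ℕ} (π : Fin n → List (ℤ × ℤ)) : Prop :=
  (∀ i : Fin n, π i ∈ SchroderPaths (0, 2 * (i : ℤ)) (2 * (i : ℤ) + 1, 2 * (i : ℤ) + 1)) ∧
    ∀ i j : Fin n, i ≠ j → List.Disjoint (π i) (π j)

namespace IsSchroderFamily

variable {m : ℕ}

theorem init {π : Fin (m + 1) → List (ℤ × ℤ)} (h : IsSchroderFamily π) :
    IsSchroderFamily (Fin.init π) :=
  ⟨fun i => h.1 i.castSucc, fun _ _ hij => h.2 _ _ (Fin.castSucc_injective _ |>.ne hij)⟩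

theorem snoc_cornerPath {σ : Fin m → List (ℤ × ℤ)} (h : IsSchroderFamily σ) :
    IsSchroderFamily (Fin.snoc σ (cornerPath m) : Fin (m + 1) → List (ℤ × ℤ)) := by
  refine ⟨fun i => ?_, fun i j hij => ?_⟩
  · induction i using Fin.lastCases with
    | last => simpa using cornerPath_mem_schroderPaths m
    | cast i => simpa using h.1 i
  · induction i using Fin.lastCases with
    | last =>
      induction j using Fin.lastCases with
      | last => exact absurd rfl hij
      | cast j => simpa using (disjoint_cornerPath j.isLt (h.1 j)).symm
    | cast i =>
      induction j using Fin.lastCases with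
      | last => simpa using disjoint_cornerPath i.isLt (h.1 i)
      | cast j => simpa using h.2 i j (by simpa using hij)

end IsSchroderFamily

theorem FirstVisit.mem {p : List (ℤ × ℤ)} {c : ℤ} {x : ℤ × ℤ} (h : FirstVisit p c x) :
    x ∈ p := by
  obtain ⟨l₁, l₂, rfl, -⟩ := h
  exact List.mem_append_right _ List.mem_cons_self

def dropTopPathEquiv (m : ℕ) :
    {π : Fin (m + 1) → List (ℤ × ℤ) //
      IsSchroderFamily π ∧ FirstVisit (π (Fin.last m)) (4 * m + 2) (m + 1, 3 * m + 1)} ≃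
    {σ : Fin m → List (ℤ × ℤ) // IsSchroderFamily σ} where
  toFun π := ⟨Fin.init π.1, π.2.1.init⟩
  invFun σ := ⟨Fin.snoc σ.1 (cornerPath m), σ.2.snoc_cornerPath,
    by simpa using firstVisit_cornerPath m⟩
  left_inv := by
    rintro ⟨π, hπ, hfv⟩
    have hlast : π (Fin.last m) = cornerPath m :=
      eq_cornerPath_of_mem (by simpa using hπ.1 (Fin.last m)) hfv.mem
    exact Subtype.ext (by simp [← hlast])
  right_inv σ := Subtype.ext (by simp)

theorem ZDTref_succ_self (m : ℕ) :
    ZDTref (m + 1) m = Nat.card {π : Fin (m + 1) → List (ℤ × ℤ) //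
      IsSchroderFamily π ∧ FirstVisit (π (Fin.last m)) (4 * m + 2) (m + 1, 3 * m + 1)} := by
  refine Nat.card_congr (Equiv.subtypeEquivRight fun π => ?_)
  rw [IsSchroderFamily, and_assoc]
  refine and_congr_right' (and_congr_right' ⟨fun h => ?_, fun h i hi => ?_⟩)
  · convert h (Fin.last m) (by simp) using 2 <;> push_cast <;> ring
  · obtain rfl : i = Fin.last m := Fin.ext (by simpa using hi)
    convert h using 2 <;> push_cast <;> ring

theorem ZDTref_top_eq_ZDT_pred_general (n : ℕ) :
    ZDTref n (n - 1) = ZDT (n - 1) := by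
  cases n with
  | zero => exact Nat.card_congr (Equiv.subtypeEquivRight fun π => by simp)
  | succ m =>
    rw [Nat.add_sub_cancel, ZDTref_succ_self]
    exact Nat.card_congr (dropTopPathEquiv m)

/-- The topmost refined count equals the full count one size down:
`Z_{n,n-1}^DT = Z_{n-1}^DT`. -/
theorem ZDTref_top_eq_ZDT_pred (n : ℕ) (hn : 2 ≤ n) :
    ZDTref n (n - 1) = ZDT (n - 1) :=
  ZDTref_top_eq_ZDT_pred_general n
end
end
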